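/- arXiv:2411.05870 — 3 statements merged into one kernel-verified Lean document; each statement's English description precedes it below -/
import Mathlib

section
/- Under the setup of the discrete smoother backward recursions, for $n \geq 2$ and $0 \leq j \leq n-1$, the smoother means at consecutive observation counts satisfy the online update formula $\mu_s^{j,n} = \mu_s^{j,n-1} + D^{j,n-2}(\mu_s^{n-1,n} - \mu_f^{n-1})$, where $D^{j,n-2} = E^j E^{j+1}\cdots E^{n-2}$ and $\mu_s^{n-1,n} = E^{n-1}\mu_f^n + b^{n-1}$. -/
open Matrix

/-- Ordered product `E^j E^{j+1} ⋯ E^{k-1}` (empty product is the identity). -/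
noncomputable def oprod {l : ℕ} (E : ℕ → Matrix (Fin l) (Fin l) ℂ) (j k : ℕ) :
    Matrix (Fin l) (Fin l) ℂ :=
  ((List.Ico j k).map E).prod

lemma oprod_self {l : ℕ} (E : ℕ → Matrix (Fin l) (Fin l) ℂ) (j : ℕ) :
    oprod E j j = 1 := by simp [oprod]

lemma oprod_cons {l : ℕ} (E : ℕ → Matrix (Fin l) (Fin l) ℂ) {j k : ℕ} (h : j < k) :
    oprod E j k = E j * oprod E (j + 1) k := by
  rw [oprod, List.Ico.eq_cons h]
  simp [oprod]

/-- Online forward-in-time update identity for the smoother means: for `n ≥ 2`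
and `0 ≤ j ≤ n-1`,
`μ_s^{j,n} = μ_s^{j,n-1} + D^{j,n-2} (μ_s^{n-1,n} - μ_f^{n-1})`,
where `D^{j,n-2} = E^j ⋯ E^{n-2} = oprod E j (n-1)`. -/
theorem stmt6 {l : ℕ} (E : ℕ → Matrix (Fin l) (Fin l) ℂ)
    (b : ℕ → Fin l → ℂ) (μf : ℕ → Fin l → ℂ) (μs : ℕ → ℕ → Fin l → ℂ)
    (hterm : ∀ n, μs n n = μf n)
    (hrec : ∀ n, ∀ j < n, μs j n = E j *ᵥ μs (j + 1) n + b j) :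
    ∀ n, 2 ≤ n → ∀ j < n,
      μs j n = μs j (n - 1) + oprod E j (n - 1) *ᵥ (μs (n - 1) n - μf (n - 1))
        ∧ μs (n - 1) n = E (n - 1) *ᵥ μf n + b (n - 1) := by
  intro n hn j hj
  have hn1 : n - 1 < n := Nat.sub_lt (by omega) one_pos
  constructor
  · -- part 1 by downward induction, phrased as induction on d = n - 1 - j
    have key : ∀ d j, j + d + 1 = n →
        μs j n = μs j (n - 1) + oprod E j (n - 1) *ᵥ (μs (n - 1) n - μf (n - 1)) := by
      intro d
      induction d with
      | zero =>
          intro j hjd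
          have hj' : j = n - 1 := by omega
          subst hj'
          rw [oprod_self, one_mulVec, hterm (n - 1)]
          ext i
          simp
      | succ d ih =>
          intro j hjd
          have h1 : j < n := by omega
          have h2 : j < n - 1 := by omega
          have h3 : (j : ℕ) + 1 + d + 1 = n := by omega
          rw [hrec n j h1, hrec (n - 1) j h2, ih (j + 1) h3,
            oprod_cons E h2, mulVec_add, ← mulVec_mulVec]
          ext i
          simp
          ring
    exact key (n - 1 - j) j (by omega)
  · rw [hrec n (n - 1) hn1, Nat.sub_add_cancel (by omega), hterm]
end

section
/- Under the setup of the discrete smoother backward covariance recursions, for $n \geq 2$ and $0 \leq j \leq n-1$, the smoother covariances at consecutive observation counts satisfy $R_s^{j,n} = R_s^{j,n-1} + D^{j,n-2}(R_s^{n-1,n} - R_f^{n-1})(D^{j,n-2})^\dagger$, where $D^{j,n-2} = E^j\cdots E^{n-2}$ and $R_s^{n-1,n} = E^{n-1}R_f^n(E^{n-1})^\dagger + P^{n-1}_n$. -/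
open Matrix

/-- Online forward-in-time update identity for the smoother covariances: for
`n ≥ 2` and `0 ≤ j ≤ n-1`,
`R_s^{j,n} = R_s^{j,n-1} + D^{j,n-2} (R_s^{n-1,n} - R_f^{n-1}) (D^{j,n-2})†`,
where `D^{j,n-2} = E^j ⋯ E^{n-2} = oprod E j (n-1)` and `P j` denotes
`P^j_{j+1}`. -/
theorem stmt7 {l : ℕ} (E : ℕ → Matrix (Fin l) (Fin l) ℂ)
    (P : ℕ → Matrix (Fin l) (Fin l) ℂ)
    (Rf : ℕ → Matrix (Fin l) (Fin l) ℂ)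
    (Rs : ℕ → ℕ → Matrix (Fin l) (Fin l) ℂ)
    (hterm : ∀ n, Rs n n = Rf n)
    (hrec : ∀ n, ∀ j < n, Rs j n = E j * Rs (j + 1) n * (E j)ᴴ + P j) :
    ∀ n, 2 ≤ n → ∀ j < n,
      Rs j n = Rs j (n - 1)
          + oprod E j (n - 1) * (Rs (n - 1) n - Rf (n - 1)) * (oprod E j (n - 1))ᴴ
        ∧ Rs (n - 1) n = E (n - 1) * Rf n * (E (n - 1))ᴴ + P (n - 1) := by

  intro n hn j hj
  have hn1 : n - 1 + 1 = n := by omega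
  have h2 : Rs (n - 1) n = E (n - 1) * Rf n * (E (n - 1))ᴴ + P (n - 1) := by
    rw [hrec n (n - 1) (by omega), hn1, hterm]
  refine ⟨?_, h2⟩
  have key : ∀ m j, j + m = n - 1 →
      Rs j n = Rs j (n - 1)
        + oprod E j (n - 1) * (Rs (n - 1) n - Rf (n - 1)) * (oprod E j (n - 1))ᴴ := by
    intro m
    induction m with
    | zero =>
      intro j hjm
      have hje : j = n - 1 := by omega
      subst hje
      simp only [oprod, List.Ico.self_empty, List.map_nil, List.prod_nil, Matrix.one_mul,
        Matrix.mul_one, hterm, conjTranspose_one]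
      abel
    | succ m ih =>
      intro j hjm
      have hjlt : j < n - 1 := by omega
      have h := ih (j + 1) (by omega)
      have hop : oprod E j (n - 1) = E j * oprod E (j + 1) (n - 1) := by
        unfold oprod
        rw [List.Ico.eq_cons hjlt, List.map_cons, List.prod_cons]
      rw [hrec n j (by omega), h, hrec (n - 1) j hjlt, hop, conjTranspose_mul]
      noncomm_ring
  exact key (n - 1 - j) j (by omega)
end

section
/- Fix $n \in \mathbb{N}$ and suppose the fixed-lag online smoother statistics with maximal lag $L = n$ apply the full update at every step: $\mu_s^{j,n}(n) = \mu_s^{j,n-1}(n-1) + D^{j,n-2}(\mu_s^{n-1,n} - \mu_f^{n-1})$ for all $0 \leq j \leq n-1$, with $\mu_s^{n,n}(n) = \mu_f^n$. Then $\mu_s^{j,n}(n)$ equals the full offline smoother mean $\mu_s^{j,n}$ obtained from the complete backward recursion $\mu_s^{j,n} = E^j\mu_s^{j+1,n} + b^j$ with terminal condition $\mu_s^{n,n} = \mu_f^n$. -/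
open Matrix

/-- The maximal-lag online smoother recovers the offline smoother: if `ν` is
the offline smoother mean defined by the full backward recursion
`ν^{j,n} = E^j ν^{j+1,n} + b^j`, `ν^{n,n} = μ_f^n`, and `μ` is the online
smoother with maximal lag `L = n`, i.e.
`μ^{j,n} = μ^{j,n-1} + D^{j,n-2} (μ_s^{n-1,n} - μ_f^{n-1})` for `j < n` with
`μ^{n,n} = μ_f^n`, where `D^{j,n-2} = E^j ⋯ E^{n-2} = oprod E j (n-1)` and
`μ_s^{n-1,n} = E^{n-1} μ_f^n + b^{n-1}`, then `μ^{j,n} = ν^{j,n}` for all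
`0 ≤ j ≤ n`. -/
theorem stmt19 {l : ℕ} (E : ℕ → Matrix (Fin l) (Fin l) ℂ)
    (b : ℕ → Fin l → ℂ) (μf : ℕ → Fin l → ℂ)
    (ν μ : ℕ → ℕ → Fin l → ℂ)
    (hνterm : ∀ n, ν n n = μf n)
    (hνrec : ∀ n, ∀ j < n, ν j n = E j *ᵥ ν (j + 1) n + b j)
    (hμterm : ∀ n, μ n n = μf n)
    (hμrec : ∀ n, ∀ j < n,
      μ j n = μ j (n - 1)
        + oprod E j (n - 1) *ᵥ ((E (n - 1) *ᵥ μf n + b (n - 1)) - μf (n - 1))) :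
    ∀ n, ∀ j ≤ n, μ j n = ν j n := by
  have key : ∀ n j, j ≤ n →
      ν j (n + 1) = ν j n + oprod E j n *ᵥ ((E n *ᵥ μf (n + 1) + b n) - μf n) := by
    intro n
    have main : ∀ d j, j + d = n →
        ν j (n + 1) = ν j n + oprod E j n *ᵥ ((E n *ᵥ μf (n + 1) + b n) - μf n) := by
      intro d
      induction d with
      | zero =>
        intro j hj
        simp only [Nat.add_zero] at hj
        subst hj
        rw [hνrec (j + 1) j (by omega), hνterm, hνterm, oprod_self]
        simp only [Matrix.one_mulVec]
        abel
      | succ d ih =>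
        intro j hj
        have hjn : j < n := by omega
        rw [hνrec (n + 1) j (by omega), hνrec n j hjn,
          ih (j + 1) (by omega), Matrix.mulVec_add, Matrix.mulVec_mulVec,
          ← oprod_cons E hjn]
        abel
    intro j hj
    exact main (n - j) j (by omega)
  intro n
  induction n with
  | zero =>
    intro j hj
    interval_cases j
    rw [hμterm, hνterm]
  | succ n ih =>
    intro j hj
    rcases Nat.lt_or_ge j (n + 1) with h | h
    · have hj' : j ≤ n := by omega
      rw [hμrec (n + 1) j h]
      simp only [Nat.add_sub_cancel]
      rw [ih j hj', key n j hj']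
    · have : j = n + 1 := by omega
      subst this
      rw [hμterm, hνterm]
end
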